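/- arXiv:1409.5327 — 3 statements merged into one kernel-verified Lean document; each statement's English description precedes it below -/
import Mathlib

section
/- The series ∑_{Q ∈ ℕ^J} Φ(Q) · ∏_{j ∈ J} a_j^{Q_j} converges and equals ∏_{l ∈ L} (1 − a_l)^{-1}. -/
/-!
Sort the arrays `m` by their column sums `Q = ∑ l, m l`: the series becomes a free sum over all
arrays, and after absorbing `∏ j, a_j ^ Q j` each array contributes
`∏ l, multinomial (m l) * ∏ j, (A l j * a_j) ^ m l j`. This factors over the pools, and for a
single pool the multinomial theorem followed by the geometric series gives
`∑ n, multinomial n * ∏ j, x_j ^ n j = ∑ k, (∑ j, x_j) ^ k = (1 - ∑ j, x_j)⁻¹`.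
All terms are nonnegative, so the rearrangements are done in `ℝ≥0∞`.
-/

open scoped BigOperators Classical

/-- The Store-Forward normalizing constant `Φ(Q)`: the (finite) sum over arrays
`m = (m l j : l ∈ L, j ∈ J)` of nonnegative integers satisfying `m l j = 0` whenever
`A l j = 0` and `∑ l, m l j = Q j` for every `j`, of
`∏ l, [(m_l)! / ∏ j (m l j)!] * ∏ j (A l j)^(m l j)`, where `m_l = ∑ j, m l j`. -/
noncomputable def Phi {J L : Type*} [Fintype J] [Fintype L]
    (A : L → J → ℝ) (Q : J → ℕ) : ℝ :=
  ∑' m : L → J → ℕ,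
    if (∀ l j, A l j = 0 → m l j = 0) ∧ (∀ j, ∑ l, m l j = Q j) then
      ∏ l, (((∑ j, m l j).factorial : ℝ) / ∏ j, ((m l j).factorial : ℝ)) *
        ∏ j, A l j ^ m l j
    else 0

open Finset
open scoped ENNReal

namespace ENNReal

theorem tsum_pi_prod {ι : Type*} [Fintype ι] {γ : Type*} (f : ι → γ → ℝ≥0∞) :
    ∑' m : ι → γ, ∏ i, f i (m i) = ∏ i, ∑' x, f i x := by
  revert f
  refine Fintype.induction_empty_option
    (P := fun ι _ => ∀ f : ι → γ → ℝ≥0∞, ∑' m : ι → γ, ∏ i, f i (m i) = ∏ i, ∑' x, f i x)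
    ?_ ?_ ?_ ι
  · intro ι κ _ e ih f
    let _ : Fintype ι := Fintype.ofEquiv κ e.symm
    rw [← (e.arrowCongr (Equiv.refl γ)).tsum_eq, ← e.prod_comp]
    simpa [← e.prod_comp] using ih (fun i => f (e i))
  · intro f
    simp
  · intro ι _ ih f
    rw [← Equiv.piOptionEquivProd.symm.tsum_eq, ENNReal.tsum_prod']
    simp [Fintype.prod_option, ENNReal.tsum_mul_left, ENNReal.tsum_mul_right, ih]

theorem tsum_multinomial_mul_prod_pow {ι : Type*} [Fintype ι] (x : ι → ℝ≥0∞) :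
    ∑' n : ι → ℕ, (Nat.multinomial univ n : ℝ≥0∞) * ∏ i, x i ^ n i = (1 - ∑ i, x i)⁻¹ := by
  rw [← ENNReal.tsum_fiberwise _ (fun n : ι → ℕ => ∑ i, n i), ← ENNReal.tsum_geometric]
  refine tsum_congr fun k => ?_
  have hfiber : (fun n : ι → ℕ => ∑ i, n i) ⁻¹' {k} =
      ((piAntidiag univ k : Finset (ι → ℕ)) : Set (ι → ℕ)) := by
    ext n; simp [mem_piAntidiag]
  rw [hfiber, sum_pow_eq_sum_piAntidiag]
  exact Finset.tsum_subtype' _ (fun n => (Nat.multinomial univ n : ℝ≥0∞) * ∏ i, x i ^ n i)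

end ENNReal

theorem Nat.cast_multinomial {α K : Type*} [Semifield K] [CharZero K] (s : Finset α)
    (f : α → ℕ) :
    (Nat.multinomial s f : K) = (∑ i ∈ s, f i).factorial / ∏ i ∈ s, ((f i).factorial : K) := by
  rw [eq_div_iff (prod_ne_zero_iff.2 fun i _ => Nat.cast_ne_zero.2 (Nat.factorial_ne_zero _)),
    mul_comm]
  exact_mod_cast Nat.multinomial_spec s f

section Weight

variable {J L : Type*} [Fintype J] [Fintype L]

def multinomialWeight {R : Type*} [CommSemiring R] (x : L → J → R) (m : L → J → ℕ) : R :=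
  ∏ l, (Nat.multinomial univ (m l) : R) * ∏ j, x l j ^ m l j

/-- The constraint `A l j = 0 → m l j = 0` in `Phi` can be dropped: arrays violating it have
weight `0`. -/
theorem Phi_eq_tsum_multinomialWeight (A : L → J → ℝ) (Q : J → ℕ) :
    Phi A Q = ∑' m : L → J → ℕ, if Q = ∑ l, m l then multinomialWeight A m else 0 := by
  refine tsum_congr fun m => ?_
  have hweight : ∏ l, (((∑ j, m l j).factorial : ℝ) / ∏ j, ((m l j).factorial : ℝ)) *
      ∏ j, A l j ^ m l j = multinomialWeight A m := by
    simp only [multinomialWeight, Nat.cast_multinomial]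
  have hcol : (∀ j, ∑ l, m l j = Q j) ↔ Q = ∑ l, m l := by
    simp only [funext_iff, Finset.sum_apply, eq_comm]
  simp only [hweight, hcol]
  by_cases hsupp : ∀ l j, A l j = 0 → m l j = 0
  · exact if_congr (and_iff_right hsupp) rfl rfl
  · push Not at hsupp
    obtain ⟨l, j, hA, hm⟩ := hsupp
    have : multinomialWeight A m = 0 :=
      prod_eq_zero (mem_univ l) (mul_eq_zero_of_right _
        (prod_eq_zero (mem_univ j) (by rw [hA, zero_pow hm])))
    simp only [this, ite_self]

theorem multinomialWeight_nonneg {x : L → J → ℝ} (hx : ∀ l j, 0 ≤ x l j) (m : L → J → ℕ) :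
    0 ≤ multinomialWeight x m :=
  prod_nonneg fun l _ =>
    mul_nonneg (Nat.cast_nonneg _) (prod_nonneg fun j _ => pow_nonneg (hx l j) _)

theorem multinomialWeight_mul_prod_pow {R : Type*} [CommSemiring R] (x : L → J → R) (c : J → R)
    (m : L → J → ℕ) :
    multinomialWeight x m * ∏ j, c j ^ (∑ l, m l) j =
      multinomialWeight (fun l j => x l j * c j) m := by
  calc multinomialWeight x m * ∏ j, c j ^ (∑ l, m l) j
      = multinomialWeight x m * ∏ l, ∏ j, c j ^ m l j := by
        simp only [Finset.sum_apply, prod_pow_eq_pow_sum, prod_comm (s := univ) (t := univ)]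
    _ = multinomialWeight (fun l j => x l j * c j) m := by
        simp only [multinomialWeight, ← prod_mul_distrib, mul_pow, mul_assoc]

theorem finite_setOf_eq_sum (Q : J → ℕ) : {m : L → J → ℕ | Q = ∑ l, m l}.Finite :=
  (Set.finite_Iic fun _ => Q).subset fun _ hm l =>
    hm ▸ single_le_sum (fun _ _ => zero_le) (mem_univ l)

theorem Phi_mul_prod_pow (A : L → J → ℝ) (c : J → ℝ) (Q : J → ℕ) :
    Phi A Q * ∏ j, c j ^ Q j = ∑' m : L → J → ℕ,
      if Q = ∑ l, m l then multinomialWeight (fun l j => A l j * c j) m else 0 := by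
  rw [Phi_eq_tsum_multinomialWeight, ← tsum_mul_right]
  refine tsum_congr fun m => ?_
  split_ifs with h
  · subst h
    exact multinomialWeight_mul_prod_pow A c m
  · exact zero_mul _

theorem ENNReal.ofReal_multinomialWeight {x : L → J → ℝ} (hx : ∀ l j, 0 ≤ x l j)
    (m : L → J → ℕ) :
    ENNReal.ofReal (multinomialWeight x m) =
      multinomialWeight (fun l j => ENNReal.ofReal (x l j)) m := by
  rw [multinomialWeight, ENNReal.ofReal_prod_of_nonneg fun l _ => ?_]
  · refine prod_congr rfl fun l _ => ?_
    rw [ENNReal.ofReal_mul (Nat.cast_nonneg _), ENNReal.ofReal_natCast,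
      ENNReal.ofReal_prod_of_nonneg fun j _ => pow_nonneg (hx l j) _]
    simp only [ENNReal.ofReal_pow (hx l _)]
  · exact mul_nonneg (Nat.cast_nonneg _) (prod_nonneg fun j _ => pow_nonneg (hx l j) _)

theorem ENNReal.tsum_multinomialWeight (x : L → J → ℝ≥0∞) :
    ∑' m, multinomialWeight x m = ∏ l, (1 - ∑ j, x l j)⁻¹ := by
  simp only [multinomialWeight, ENNReal.tsum_pi_prod fun l (n : J → ℕ) =>
    (Nat.multinomial univ n : ℝ≥0∞) * ∏ j, x l j ^ n j, ENNReal.tsum_multinomial_mul_prod_pow]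

theorem tsum_ofReal_Phi_mul_prod_pow {A : L → J → ℝ} {c : J → ℝ} (hA : ∀ l j, 0 ≤ A l j)
    (hc : ∀ j, 0 ≤ c j) :
    ∑' Q, ENNReal.ofReal (Phi A Q * ∏ j, c j ^ Q j) =
      ∏ l, (1 - ∑ j, ENNReal.ofReal (A l j * c j))⁻¹ := by
  have hx : ∀ l j, 0 ≤ A l j * c j := fun l j => mul_nonneg (hA l j) (hc j)
  have hfiber : ∀ Q, ENNReal.ofReal (Phi A Q * ∏ j, c j ^ Q j) =
      ∑' m, if Q = ∑ l, m l then
        ENNReal.ofReal (multinomialWeight (fun l j => A l j * c j) m) else 0 := by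
    intro Q
    rw [Phi_mul_prod_pow, ENNReal.ofReal_tsum_of_nonneg
      (fun m => by split_ifs <;> [exact multinomialWeight_nonneg hx m; rfl])
      (summable_of_hasFiniteSupport ((finite_setOf_eq_sum Q).subset fun m hm => by
        by_contra h; exact hm (if_neg h)))]
    simp only [apply_ite ENNReal.ofReal, ENNReal.ofReal_zero]
  calc ∑' Q, ENNReal.ofReal (Phi A Q * ∏ j, c j ^ Q j)
      = ∑' m, ENNReal.ofReal (multinomialWeight (fun l j => A l j * c j) m) := by
        simp only [hfiber]; rw [ENNReal.tsum_comm]; simp only [tsum_ite_eq]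
    _ = ∏ l, (1 - ∑ j, ENNReal.ofReal (A l j * c j))⁻¹ := by
        simp only [ENNReal.ofReal_multinomialWeight hx, ENNReal.tsum_multinomialWeight]

end Weight

theorem hasSum_of_tsum_ofReal_eq {α : Type*} {f : α → ℝ} {c : ℝ} (hf : ∀ a, 0 ≤ f a)
    (hc : 0 ≤ c) (h : ∑' a, ENNReal.ofReal (f a) = ENNReal.ofReal c) : HasSum f c := by
  have hsum := ENNReal.summable.hasSum (f := fun a => ENNReal.ofReal (f a))
  rw [h] at hsum
  simpa [Real.coe_toNNReal _ (hf _), hc] using NNReal.hasSum_coe.2 (ENNReal.hasSum_coe.1 hsum)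

theorem storeForward_normalizing_series_general
    {J L R : Type*} [Fintype J] [Fintype L] [Fintype R]
    (A : L → J → ℝ) (hA : ∀ l j, 0 ≤ A l j)
    (route : R → List J)
    (a : R → ℝ) (ha : ∀ r, 0 < a r)
    (aJ : J → ℝ) (haJ : ∀ j, aJ j = ∑ r : R, if j ∈ route r then a r else 0)
    (aL : L → ℝ) (haL : ∀ l, aL l = ∑ j, A l j * aJ j)
    (hsub : ∀ l, aL l < 1) :
    HasSum (fun Q : J → ℕ => Phi A Q * ∏ j, aJ j ^ Q j) (∏ l, (1 - aL l)⁻¹) := by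
  have haJ_nonneg : ∀ j, 0 ≤ aJ j := fun j =>
    haJ j ▸ sum_nonneg fun r _ => ite_nonneg (ha r).le le_rfl
  have hx : ∀ l j, 0 ≤ A l j * aJ j := fun l j => mul_nonneg (hA l j) (haJ_nonneg j)
  refine hasSum_of_tsum_ofReal_eq (fun Q => ?_)
    (prod_nonneg fun l _ => inv_nonneg.2 (sub_nonneg.2 (hsub l).le)) ?_
  · rw [Phi_mul_prod_pow]
    exact tsum_nonneg fun m => ite_nonneg (multinomialWeight_nonneg hx m) le_rfl
  rw [tsum_ofReal_Phi_mul_prod_pow hA haJ_nonneg,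
    ENNReal.ofReal_prod_of_nonneg fun l _ => inv_nonneg.2 (sub_nonneg.2 (hsub l).le)]
  refine prod_congr rfl fun l _ => ?_
  have haL_nonneg : 0 ≤ aL l := haL l ▸ sum_nonneg fun j _ => hx l j
  rw [← ENNReal.ofReal_sum_of_nonneg fun j _ => hx l j, ← haL,
    ENNReal.ofReal_inv_of_pos (sub_pos.2 (hsub l)), ENNReal.ofReal_sub _ haL_nonneg,
    ENNReal.ofReal_one]

/-- the series `∑_{Q ∈ ℕ^J} Φ(Q) ∏_j a_j^(Q j)` converges and equals
`∏_l (1 - a_l)⁻¹`. -/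
theorem storeForward_normalizing_series
    {J L R : Type*} [Fintype J] [Nonempty J] [Fintype L] [Nonempty L] [Fintype R]
    (A : L → J → ℝ) (hA : ∀ l j, 0 ≤ A l j)
    (route : R → List J) (hnodup : ∀ r, (route r).Nodup)
    (a : R → ℝ) (ha : ∀ r, 0 < a r)
    (aJ : J → ℝ) (haJ : ∀ j, aJ j = ∑ r : R, if j ∈ route r then a r else 0)
    (aL : L → ℝ) (haL : ∀ l, aL l = ∑ j, A l j * aJ j)
    (hsub : ∀ l, aL l < 1) :
    HasSum (fun Q : J → ℕ => Phi A Q * ∏ j, aJ j ^ Q j) (∏ l, (1 - aL l)⁻¹) :=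
  storeForward_normalizing_series_general A hA route a ha aJ haJ aL haL hsub
end

section
/- Proposition 1 (product-form representation of the stationary queue lengths): the pushforward of the product measure μ under the map T is the probability mass function Q ↦ ∏_{l ∈ L}(1 − a_l) · Φ(Q) · ∏_{j ∈ J} a_j^{Q_j} on ℕ^J; that is, for every Q ∈ ℕ^J, μ({m : T(m) = Q}) = ∏_{l ∈ L}(1 − a_l) · Φ(Q) · ∏_{j ∈ J} a_j^{Q_j}. -/
/-!
Each factor `p_l(m_l)` splits as `(1 - a_l)`, times the `l`-th factor of the summand of `Φ`,
times `∏_j a_j ^ m_lj`. Over the fibre `T(m) = Q` the last factors multiply to `∏_j a_j ^ Q_j`,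
so summing the product over the (finite) fibre produces `Φ(Q)`; the support condition in `Φ`
is harmless because the summand vanishes whenever `A_lj = 0 < m_lj`.
-/

open scoped BigOperators Classical

/-- The probability mass function `p_l` of the context (extended by zero off its support):
`p_l(k) = (1 - a_l) * (|k|)! / ∏_j (k j)! * ∏_j (A l j * a_j)^(k j)` where `|k| = ∑ j, k j`. -/
noncomputable def pl {J : Type*} [Fintype J] (Al : J → ℝ) (aJ : J → ℝ) (al : ℝ)
    (k : J → ℕ) : ℝ :=
  (1 - al) * (((∑ j, k j).factorial : ℝ) / ∏ j, ((k j).factorial : ℝ)) *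
    ∏ j, (Al j * aJ j) ^ k j

section ProductForm

open Finset

variable {J L : Type*} [Fintype J] [Fintype L]

noncomputable def phiWeight (A : L → J → ℝ) (m : L → J → ℕ) : ℝ :=
  ∏ l, (((∑ j, m l j).factorial : ℝ) / ∏ j, ((m l j).factorial : ℝ)) * ∏ j, A l j ^ m l j

theorem phiWeight_eq_zero {A : L → J → ℝ} {m : L → J → ℕ} {l : L} {j : J}
    (hA : A l j = 0) (hm : m l j ≠ 0) : phiWeight A m = 0 :=
  prod_eq_zero (mem_univ l) <| mul_eq_zero_of_right _ <|
    prod_eq_zero (mem_univ j) (by rw [hA, zero_pow hm])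

instance finite_colSum_eq (Q : J → ℕ) : Finite {m : L → J → ℕ // ∀ j, ∑ l, m l j = Q j} := by
  have hsub : {m : L → J → ℕ | ∀ j, ∑ l, m l j = Q j} ⊆
      Set.pi Set.univ fun _ => Set.pi Set.univ fun j => Set.Iic (Q j) :=
    fun m hm l _ j _ => by
      rw [Set.mem_Iic, ← hm j]
      exact single_le_sum (f := fun l => m l j) (fun _ _ => Nat.zero_le _) (mem_univ l)
  exact ((Set.Finite.pi fun _ => Set.Finite.pi fun _ => Set.finite_Iic _).subset
    hsub).to_subtype

theorem Phi_eq_tsum_phiWeight (A : L → J → ℝ) (Q : J → ℕ) :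
    Phi A Q = ∑' m : {m : L → J → ℕ // ∀ j, ∑ l, m l j = Q j}, phiWeight A m.1 := by
  rw [Phi]
  refine ((tsum_subtype {m : L → J → ℕ | ∀ j, ∑ l, m l j = Q j} (phiWeight A)).trans
    (tsum_congr fun m => ?_)).symm
  rw [Set.indicator_apply]
  by_cases hQ : m ∈ {m : L → J → ℕ | ∀ j, ∑ l, m l j = Q j}
  · rw [if_pos hQ]
    by_cases hsupp : ∀ l j, A l j = 0 → m l j = 0
    · rw [if_pos ⟨hsupp, hQ⟩, phiWeight]
    · push Not at hsupp
      obtain ⟨l, j, hA, hm⟩ := hsupp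
      rw [if_neg fun h => hm (h.1 l j hA), phiWeight_eq_zero hA hm]
  · rw [if_neg hQ, if_neg fun h => hQ h.2]

theorem prod_pl_eq (A : L → J → ℝ) (aJ : J → ℝ) (aL : L → ℝ) (m : L → J → ℕ) :
    ∏ l, pl (A l) aJ (aL l) (m l) =
      (∏ l, (1 - aL l)) * phiWeight A m * ∏ j, aJ j ^ ∑ l, m l j := by
  have hpow : ∏ j, aJ j ^ ∑ l, m l j = ∏ l, ∏ j, aJ j ^ m l j := by
    rw [prod_comm]
    exact prod_congr rfl fun j _ => (prod_pow_eq_pow_sum _ _ _).symm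
  simp only [pl, phiWeight, hpow, mul_pow, prod_mul_distrib]
  ring

end ProductForm

theorem product_form_representation_general
    {J L : Type*} [Fintype J] [Fintype L]
    (A : L → J → ℝ)
    (aJ : J → ℝ)
    (aL : L → ℝ)
    (Q : J → ℕ) :
    HasSum
      (fun m : {m : L → J → ℕ // ∀ j, ∑ l, m l j = Q j} =>
        ∏ l, pl (A l) aJ (aL l) (m.1 l))
      ((∏ l, (1 - aL l)) * Phi A Q * ∏ j, aJ j ^ Q j) := by
  suffices hval : (∏ l, (1 - aL l)) * Phi A Q * ∏ j, aJ j ^ Q j =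
      ∑' m : {m : L → J → ℕ // ∀ j, ∑ l, m l j = Q j}, ∏ l, pl (A l) aJ (aL l) (m.1 l) by
    rw [hval]
    exact Summable.of_finite.hasSum
  rw [Phi_eq_tsum_phiWeight, ← tsum_mul_left, ← tsum_mul_right]
  refine tsum_congr fun m => ?_
  simp only [prod_pl_eq, m.2]

/-- Proposition 1, product-form representation of stationary queue lengths:
the pushforward of the product measure `μ = ⊗_l p_l` under `T(m) = (∑ l, m l j)_j` is the
pmf `Q ↦ ∏_l (1 - a_l) * Φ(Q) * ∏_j a_j^(Q j)`; that is, for every `Q`,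
`μ({m : T(m) = Q}) = ∏_l (1 - a_l) * Φ(Q) * ∏_j a_j^(Q j)`.
Here `μ(m) = ∏ l, p_l (m l)`. -/
theorem product_form_representation
    {J L R : Type*} [Fintype J] [Nonempty J] [Fintype L] [Nonempty L] [Fintype R]
    (A : L → J → ℝ) (hA : ∀ l j, 0 ≤ A l j)
    (route : R → List J) (hnodup : ∀ r, (route r).Nodup)
    (a : R → ℝ) (ha : ∀ r, 0 < a r)
    (aJ : J → ℝ) (haJ : ∀ j, aJ j = ∑ r : R, if j ∈ route r then a r else 0)
    (aL : L → ℝ) (haL : ∀ l, aL l = ∑ j, A l j * aJ j)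
    (hsub : ∀ l, aL l < 1)
    (Q : J → ℕ) :
    HasSum
      (fun m : {m : L → J → ℕ // ∀ j, ∑ l, m l j = Q j} =>
        ∏ l, pl (A l) aJ (aL l) (m.1 l))
      ((∏ l, (1 - aL l)) * Phi A Q * ∏ j, aJ j ^ Q j) :=
  product_form_representation_general A aJ aL Q
end

section
/- Corollary (conditional route-class distribution): fix Q ∈ ℕ^J such that a_j > 0 whenever Q_j ≥ 1. Then: (i) summing the measure π over all admissible orderings γ for Q gives ∑_γ π(Q, γ) = Φ(Q) · ∏_{j ∈ J} a_j^{Q_j}; and (ii) for every admissible γ, π(Q, γ) / ∑_{γ'} π(Q, γ') = ∏_{j ∈ J} ∏_{k=1}^{Q_j} (a_{γ_j(k)} / a_j). In particular, conditionally on the queue-length vector Q, the route classes of the packets in the queues are independent, a packet at queue j belonging to route r with probability a_r / a_j. -/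
open scoped BigOperators Classical

section Phi

variable {J L : Type*} [Fintype J] [Fintype L] (A : L → J → ℝ) (Q : J → ℕ)

noncomputable def phiTerm (m : L → J → ℕ) : ℝ :=
  if (∀ l j, A l j = 0 → m l j = 0) ∧ (∀ j, ∑ l, m l j = Q j) then
    ∏ l, (((∑ j, m l j).factorial : ℝ) / ∏ j, ((m l j).factorial : ℝ)) * ∏ j, A l j ^ m l j
  else 0

lemma phiTerm_nonneg (hA : ∀ l j, 0 ≤ A l j) (m : L → J → ℕ) : 0 ≤ phiTerm A Q m := by
  unfold phiTerm
  split_ifs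
  · exact Finset.prod_nonneg fun l _ =>
      mul_nonneg (by positivity) (Finset.prod_nonneg fun j _ => pow_nonneg (hA l j) _)
  · exact le_rfl

lemma summable_phiTerm : Summable (phiTerm A Q) := by
  refine summable_of_ne_finset_zero
    (s := Fintype.piFinset fun _ => Fintype.piFinset fun j => Finset.range (Q j + 1))
    fun m hm => if_neg fun ⟨_, hsum⟩ => hm ?_
  simp only [Fintype.mem_piFinset, Finset.mem_range, Nat.lt_succ_iff]
  intro l j
  exact hsum j ▸ Finset.single_le_sum (f := fun l' => m l' j) (by simp) (Finset.mem_univ l)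

lemma phiTerm_pos_of_forall_pos (c : J → L) (hc : ∀ j, 0 < A (c j) j) :
    0 < phiTerm A Q fun l j => if l = c j then Q j else 0 := by
  have hadm : (∀ l j, A l j = 0 → (if l = c j then Q j else 0) = 0) ∧
      ∀ j, ∑ l, (if l = c j then Q j else 0) = Q j := by
    refine ⟨fun l j hA => ?_, fun j => by simp⟩
    rw [if_neg]
    rintro rfl
    exact (hc j).ne' hA
  rw [phiTerm, if_pos hadm]
  refine Finset.prod_pos fun l _ => mul_pos (by positivity) (Finset.prod_pos fun j _ => ?_)
  split_ifs with h
  · exact pow_pos (h ▸ hc j) _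
  · exact one_pos

lemma Phi_pos (hA : ∀ l j, 0 ≤ A l j) (hcol : ∀ j, ∃ l, 0 < A l j) : 0 < Phi A Q := by
  choose c hc using hcol
  exact (summable_phiTerm A Q).tsum_pos (phiTerm_nonneg A Q hA) _
    (phiTerm_pos_of_forall_pos A Q c hc)

end Phi

section Admissible

variable {J R : Type*}

def listOfLengthEquiv (p : R → Prop) (n : ℕ) :
    {l : List R // l.length = n ∧ ∀ x ∈ l, p x} ≃ (Fin n → {x // p x}) where
  toFun l i := ⟨l.1.get (Fin.cast l.2.1.symm i), l.2.2 _ (List.get_mem _ _)⟩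
  invFun f := ⟨List.ofFn fun i => (f i).1, List.length_ofFn, fun x hx => by
    obtain ⟨i, rfl⟩ := List.mem_ofFn.mp hx
    exact (f i).2⟩
  left_inv l := Subtype.ext <| List.ext_get (by simp [l.2.1]) fun _ _ _ => by simp
  right_inv f := funext fun i => Subtype.ext <| by simp

lemma prod_map_listOfLengthEquiv_symm {M : Type*} [CommMonoid M] (p : R → Prop) (n : ℕ)
    (a : R → M) (f : Fin n → {x // p x}) :
    (((listOfLengthEquiv p n).symm f).1.map a).prod = ∏ i, a (f i) := by
  simp [listOfLengthEquiv, List.map_ofFn, List.prod_ofFn]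

abbrev AdmissibleState (p : J → R → Prop) (Q : J → ℕ) :=
  {s : J → List R // (∀ j, (s j).length = Q j) ∧ ∀ j, ∀ r ∈ s j, p j r}

def admissibleStateEquiv (p : J → R → Prop) (Q : J → ℕ) :
    AdmissibleState p Q ≃ ∀ j, Fin (Q j) → {r // p j r} :=
  (Equiv.subtypeEquivRight fun _ => forall_and.symm).trans <|
    Equiv.subtypePiEquivPi.trans <| Equiv.piCongrRight fun j => listOfLengthEquiv (p j) (Q j)

lemma hasSum_prod_map_admissibleState [Fintype J] [Fintype R] (p : J → R → Prop)
    [∀ j, DecidablePred (p j)] {M : Type*} [CommSemiring M] [TopologicalSpace M] (Q : J → ℕ)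
    (a : R → M) :
    HasSum (fun s : AdmissibleState p Q => ∏ j, ((s.1 j).map a).prod)
      (∏ j, (∑ r : {r // p j r}, a r) ^ Q j) := by
  rw [← (admissibleStateEquiv p Q).symm.hasSum_iff]
  convert hasSum_fintype _ using 1
  simp only [Fintype.sum_pow, Fintype.prod_sum]
  refine Fintype.sum_congr _ _ fun f => Fintype.prod_congr _ _ fun j => ?_
  exact (prod_map_listOfLengthEquiv_symm (p j) (Q j) a (f j)).symm

end Admissible

lemma List.prod_map_div_const {ι M : Type*} [DivisionCommMonoid M] (l : List ι) (a : ι → M)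
    (c : M) :
    (l.map fun r => a r / c).prod = (l.map a).prod / c ^ l.length := by
  simp [div_eq_mul_inv, List.prod_map_mul]

theorem conditional_route_class_distribution_general
    {J L R : Type*} [Fintype J] [Fintype L] [Fintype R]
    (A : L → J → ℝ) (hA : ∀ l j, 0 ≤ A l j)
    (hcol : ∀ j, ∃ l, 0 < A l j)
    (route : R → List J)
    (a : R → ℝ)
    (aJ : J → ℝ) (haJ : ∀ j, aJ j = ∑ r : R, if j ∈ route r then a r else 0)
    (Q : J → ℕ) :
    HasSum
      (fun s : {s : J → List R // (∀ j, (s j).length = Q j) ∧ ∀ j, ∀ r ∈ s j, j ∈ route r} =>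
        Phi A Q * ∏ j, ((s.1 j).map a).prod)
      (Phi A Q * ∏ j, aJ j ^ Q j) ∧
    ∀ s : {s : J → List R // (∀ j, (s j).length = Q j) ∧ ∀ j, ∀ r ∈ s j, j ∈ route r},
      (Phi A Q * ∏ j, ((s.1 j).map a).prod) /
          (∑' s' : {s : J → List R //
              (∀ j, (s j).length = Q j) ∧ ∀ j, ∀ r ∈ s j, j ∈ route r},
            Phi A Q * ∏ j, ((s'.1 j).map a).prod)
        = ∏ j, ((s.1 j).map fun r => a r / aJ j).prod := by
  have hroutes : ∀ j, ∑ r : {r // j ∈ route r}, a r = aJ j := fun j => by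
    rw [haJ, ← Finset.sum_filter]
    exact (Finset.sum_subtype _ (by simp) a).symm
  have hsum := (hasSum_prod_map_admissibleState (fun j r => j ∈ route r) Q a).mul_left (Phi A Q)
  simp only [hroutes] at hsum
  refine ⟨hsum, fun s => ?_⟩
  rw [hsum.tsum_eq, mul_div_mul_left _ _ (Phi_pos A Q hA hcol).ne', ← Finset.prod_div_distrib]
  refine Finset.prod_congr rfl fun j _ => ?_
  rw [List.prod_map_div_const, s.2.1 j]

/-- conditional route-class distribution.  A state of the FIFO routed
Store-Forward network with queue-length vector `Q` is encoded as `s : J → List R`, where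
`s j` is the list of route classes of the packets in queue `j` (head = front of queue);
admissibility for `Q` means `(s j).length = Q j` and every packet in queue `j` lies on a
route through `j`.  With `π(Q,γ) = Φ(Q) ∏_j ∏_{k=1}^{Q_j} a_{γ_j(k)}`:
(i) `∑_γ π(Q,γ) = Φ(Q) ∏_j a_j^(Q j)`, and
(ii) for every admissible `γ`,
`π(Q,γ) / ∑_{γ'} π(Q,γ') = ∏_j ∏_{k=1}^{Q_j} (a_{γ_j(k)} / a_j)`. -/
theorem conditional_route_class_distribution
    {J L R : Type*} [Fintype J] [Nonempty J] [Fintype L] [Nonempty L] [Fintype R]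
    (A : L → J → ℝ) (hA : ∀ l j, 0 ≤ A l j)
    (hcol : ∀ j, ∃ l, 0 < A l j)
    (route : R → List J) (hnodup : ∀ r, (route r).Nodup)
    (a : R → ℝ) (ha : ∀ r, 0 < a r)
    (aJ : J → ℝ) (haJ : ∀ j, aJ j = ∑ r : R, if j ∈ route r then a r else 0)
    (aL : L → ℝ) (haL : ∀ l, aL l = ∑ j, A l j * aJ j)
    (hsub : ∀ l, aL l < 1)
    (Q : J → ℕ) (hQ : ∀ j, 1 ≤ Q j → 0 < aJ j) :
    HasSum
      (fun s : {s : J → List R // (∀ j, (s j).length = Q j) ∧ ∀ j, ∀ r ∈ s j, j ∈ route r} =>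
        Phi A Q * ∏ j, ((s.1 j).map a).prod)
      (Phi A Q * ∏ j, aJ j ^ Q j) ∧
    ∀ s : {s : J → List R // (∀ j, (s j).length = Q j) ∧ ∀ j, ∀ r ∈ s j, j ∈ route r},
      (Phi A Q * ∏ j, ((s.1 j).map a).prod) /
          (∑' s' : {s : J → List R //
              (∀ j, (s j).length = Q j) ∧ ∀ j, ∀ r ∈ s j, j ∈ route r},
            Phi A Q * ∏ j, ((s'.1 j).map a).prod)
        = ∏ j, ((s.1 j).map fun r => a r / aJ j).prod :=
  conditional_route_class_distribution_general A hA hcol route a aJ haJ Q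
end
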